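/- Every (F ∩ F')-timed automorphism decomposes as a finite composition π = πₙ ∘ ... ∘ π₁ where each πᵢ is either an F-timed automorphism or an F'-timed automorphism, for any finite F, F' ⊆ [0,1). -/

import Mathlib

/-- A timed automorphism: a monotone bijection `π : ℝ → ℝ` with `π (x+1) = π x + 1`. -/
def IsTimedAutomorphism (π : ℝ → ℝ) : Prop :=
  Function.Bijective π ∧ StrictMono π ∧ ∀ x : ℝ, π (x + 1) = π x + 1

/-- An `S`-timed automorphism: a timed automorphism fixing every point of `S`. -/
def IsSTimedAutomorphism (S : Set ℝ) (π : ℝ → ℝ) : Prop :=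
  IsTimedAutomorphism π ∧ ∀ t ∈ S, π t = t

/-- A timed word: a finite sequence of letters with nonnegative, nondecreasing timestamps. -/
def IsTimedWord {A : Type*} (w : List (A × ℝ)) : Prop :=
  (∀ p ∈ w, 0 ≤ p.2) ∧ (w.map Prod.snd).Chain' (· ≤ ·)

/-- Pointwise action of a real function on the timestamps of a timed word. -/
def mapTW {A : Type*} (π : ℝ → ℝ) (w : List (A × ℝ)) : List (A × ℝ) :=
  w.map fun p => (p.1, π p.2)

/-!
The timed automorphisms fixing `S` form a subgroup of the permutations of `ℝ`, and the claim is
that the subgroup for `F ∩ F'` lies in the join of those for `F` and `F'`. Adding the points of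
`F' \ F` to `F ∩ F'` one at a time, it suffices to treat `F' = insert t F''` with `t ∉ F` and to
write an automorphism `τ` fixing `F''` in the join.

Near a point `z` not congruent mod 1 to a point of a finite set `S`, a small periodic tent
perturbation of the identity fixes `S` and moves `z` to any nearby point. Hence on a connected
set none of whose points is congruent both to `F ∪ F''` and to `F'`, the join acts transitively.
The interval between `t` and `τ t` is such a set: a bad point would be congruent to `F''`, hence
fixed by `τ`, which is impossible strictly between `t` and `τ t`. So some `g` in the join, fixing
`F''`, sends `τ t` to `t`, and then `g * τ` fixes `F'` and `τ = g⁻¹ * (g * τ)`.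
-/

open Set Filter Topology Function

theorem IsTimedAutomorphism.comp {f g : ℝ → ℝ} (hf : IsTimedAutomorphism f)
    (hg : IsTimedAutomorphism g) : IsTimedAutomorphism (f ∘ g) :=
  ⟨hf.1.comp hg.1, hf.2.1.comp hg.2.1, fun x => by simp only [comp_apply, hg.2.2, hf.2.2]⟩

theorem IsTimedAutomorphism.perm_inv {e : Equiv.Perm ℝ} (he : IsTimedAutomorphism e) :
    IsTimedAutomorphism ⇑e⁻¹ :=
  ⟨e⁻¹.bijective, fun a b hab => he.2.1.lt_iff_lt.1 (by simpa using hab), fun x => by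
    rw [Equiv.Perm.inv_eq_iff_eq, he.2.2]; simp⟩

theorem IsTimedAutomorphism.map_add_int {f : ℝ → ℝ} (hf : IsTimedAutomorphism f) (x : ℝ)
    (n : ℤ) : f (x + n) = f x + n :=
  AddConstMapClass.map_add_int (⟨f, hf.2.2⟩ : AddConstMap ℝ ℝ 1 1) x n

theorem IsTimedAutomorphism.map_eq_self_of_coe_eq {f : ℝ → ℝ} (hf : IsTimedAutomorphism f)
    {a z : ℝ} (ha : f a = a) (hz : (z : UnitAddCircle) = a) : f z = z := by
  obtain ⟨n, hn⟩ := (AddCircle.coe_eq_zero_iff 1).1 (by rw [AddCircle.coe_sub, hz, sub_self] :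
    ((z - a : ℝ) : UnitAddCircle) = 0)
  rw [zsmul_one] at hn
  rw [show z = a + n by linarith, hf.map_add_int, ha]

theorem isTimedAutomorphism_add_of_lipschitzWith {f : ℝ → ℝ} {K : NNReal} (hK : K < 1)
    (hf : LipschitzWith K f) (hper : Periodic f 1) : IsTimedAutomorphism (fun t => t + f t) := by
  have hmono : StrictMono (fun t => t + f t) := fun a b hab => by
    show a + f a < b + f b
    have hdist := hf.dist_le_mul a b
    rw [Real.dist_eq, Real.dist_eq, abs_sub_comm a b, abs_of_pos (sub_pos.2 hab)] at hdist
    have hK' : (K : ℝ) * (b - a) < b - a := mul_lt_of_lt_one_left (sub_pos.2 hab) hK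
    linarith [le_abs_self (f a - f b)]
  obtain ⟨C, hC⟩ := (hper.isBounded_of_continuous one_ne_zero hf.continuous).exists_norm_le
  have hbound (t : ℝ) : |f t| ≤ C := hC _ (mem_range_self t)
  have hsurj : Surjective (fun t => t + f t) :=
    (continuous_id.add hf.continuous).surjective
      (tendsto_atTop_add_right_of_le _ (-C) tendsto_id fun t => neg_le_of_abs_le (hbound t))
      (tendsto_atBot_add_right_of_ge _ C tendsto_id fun t => le_of_abs_le (hbound t))
  exact ⟨⟨hmono.injective, hsurj⟩, hmono, fun t => by simp only [hper t]; ring⟩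

theorem StrictMono.eq_of_mem_uIcc_of_map_eq_self {α : Type*} [LinearOrder α] {f : α → α}
    (hf : StrictMono f) {t z : α} (hz : z ∈ uIcc t (f t)) (hfz : f z = z) : z = t := by
  rcases lt_trichotomy z t with h | h | h
  · have := hfz ▸ hf h
    rcases mem_uIcc.1 hz with hz | hz <;> exact absurd hz.1 (not_le.2 ‹_›)
  · exact h
  · have := hfz ▸ hf h
    rcases mem_uIcc.1 hz with hz | hz <;> exact absurd hz.2 (not_le.2 ‹_›)

def timedAutGroup : Subgroup (Equiv.Perm ℝ) where
  carrier := {e | IsTimedAutomorphism e}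
  mul_mem' ha hb := ha.comp hb
  one_mem' := ⟨bijective_id, strictMono_id, fun _ => rfl⟩
  inv_mem' := IsTimedAutomorphism.perm_inv

def timedFixingSubgroup (S : Set ℝ) : Subgroup (Equiv.Perm ℝ) :=
  timedAutGroup ⊓ fixingSubgroup (Equiv.Perm ℝ) S

theorem mem_timedFixingSubgroup {S : Set ℝ} {e : Equiv.Perm ℝ} :
    e ∈ timedFixingSubgroup S ↔ IsSTimedAutomorphism S e := by
  simp only [timedFixingSubgroup, Subgroup.mem_inf, mem_fixingSubgroup_iff,
    Equiv.Perm.smul_def, IsSTimedAutomorphism]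
  rfl

theorem timedFixingSubgroup_antitone : Antitone timedFixingSubgroup :=
  fun _ _ h => inf_le_inf_left _ (fixingSubgroup_antitone _ _ h)

theorem eventually_exists_mem_timedFixingSubgroup_apply_eq {S : Set ℝ} (hS : S.Finite) {z : ℝ}
    (hz : ∀ s ∈ S, (z : UnitAddCircle) ≠ s) :
    ∀ᶠ w in 𝓝 z, ∃ e ∈ timedFixingSubgroup S, e z = w := by
  obtain ⟨δ, hδS, hδ⟩ : ∃ δ, (∀ s ∈ S, δ ≤ ‖((s - z : ℝ) : UnitAddCircle)‖) ∧ 0 < δ := by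
    refine ((hS.eventually_all.2 fun s hs => ?_).and self_mem_nhdsWithin).exists (f := 𝓝[>] 0)
    refine eventually_nhdsWithin_of_eventually_nhds (ge_mem_nhds ?_)
    rw [norm_pos_iff, AddCircle.coe_sub, sub_ne_zero]
    exact (hz s hs).symm
  filter_upwards [Metric.ball_mem_nhds z hδ] with w hw
  rw [Metric.mem_ball, Real.dist_eq] at hw
  -- a tent of height `δ` around `z + ℤ`, scaled so that its peak moves `z` to `w`
  set β : ℝ → ℝ := fun t => max (δ - ‖((t - z : ℝ) : UnitAddCircle)‖) 0
  set c := (w - z) / δ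
  have hβ : LipschitzWith 1 β := LipschitzWith.of_dist_le_mul fun a b => by
    rw [Real.dist_eq, Real.dist_eq, NNReal.coe_one, one_mul]
    calc |β a - β b|
        ≤ |‖((b - z : ℝ) : UnitAddCircle)‖ - ‖((a - z : ℝ) : UnitAddCircle)‖| :=
          (abs_max_sub_max_le_abs _ _ 0).trans_eq (by congr 1; ring)
      _ ≤ ‖((b - z : ℝ) : UnitAddCircle) - ((a - z : ℝ) : UnitAddCircle)‖ :=
          abs_norm_sub_norm_le _ _
      _ ≤ |a - b| := by
          rw [← AddCircle.coe_sub, sub_sub_sub_cancel_right, ← Real.norm_eq_abs, norm_sub_rev]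
          exact QuotientAddGroup.norm_mk_le_norm
  have hc : ‖c‖₊ * 1 < 1 := by
    rw [mul_one, ← NNReal.coe_lt_coe, coe_nnnorm, Real.norm_eq_abs, abs_div, abs_of_pos hδ]
    exact (div_lt_one hδ).2 hw
  have hper : Periodic ((c • ·) ∘ β) 1 := fun t => by
    simp only [comp_apply, β, add_sub_right_comm, AddCircle.coe_add, AddCircle.coe_period,
      add_zero]
  have hσ := isTimedAutomorphism_add_of_lipschitzWith hc ((lipschitzWith_smul c).comp hβ) hper
  refine ⟨Equiv.ofBijective _ hσ.1, mem_timedFixingSubgroup.2 ⟨hσ, fun s hs => ?_⟩, ?_⟩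
  · show s + c • max (δ - ‖((s - z : ℝ) : UnitAddCircle)‖) 0 = s
    rw [max_eq_right (sub_nonpos.2 (hδS s hs)), smul_zero, add_zero]
  · show z + c • max (δ - ‖((z - z : ℝ) : UnitAddCircle)‖) 0 = w
    rw [sub_self, AddCircle.coe_zero, norm_zero, sub_zero, max_eq_left hδ.le, smul_eq_mul,
      div_mul_cancel₀ _ hδ.ne', add_sub_cancel]

theorem IsPreconnected.exists_mem_sup_apply_eq {S S' s : Set ℝ} (hS : S.Finite)
    (hS' : S'.Finite) (hs : IsPreconnected s)
    (hsep : ∀ z ∈ s, (∀ a ∈ S, (z : UnitAddCircle) ≠ a) ∨ ∀ a ∈ S', (z : UnitAddCircle) ≠ a)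
    {x y : ℝ} (hx : x ∈ s) (hy : y ∈ s) :
    ∃ g ∈ timedFixingSubgroup S ⊔ timedFixingSubgroup S', g x = y := by
  refine hs.induction₂ (fun x y => ∃ g ∈ timedFixingSubgroup S ⊔ timedFixingSubgroup S', g x = y)
    (fun z hz => ?_) ?_ ?_ hx hy
  · refine Eventually.filter_mono nhdsWithin_le_nhds ?_
    rcases hsep z hz with h | h
    · exact (eventually_exists_mem_timedFixingSubgroup_apply_eq hS h).mono
        fun w ⟨e, he, hew⟩ => ⟨e, Subgroup.mem_sup_left he, hew⟩
    · exact (eventually_exists_mem_timedFixingSubgroup_apply_eq hS' h).mono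
        fun w ⟨e, he, hew⟩ => ⟨e, Subgroup.mem_sup_right he, hew⟩
  · rintro x - - - - - ⟨g, hg, rfl⟩ ⟨g', hg', rfl⟩
    exact ⟨g' * g, mul_mem hg' hg, rfl⟩
  · rintro x - - - ⟨g, hg, rfl⟩
    exact ⟨g⁻¹, inv_mem hg, by simp⟩

theorem timedFixingSubgroup_le_sup_insert {F F'' : Set ℝ} {t : ℝ} (hF : F.Finite)
    (hF'' : F''.Finite) (hFsub : F ⊆ Ico 0 1) (hF''sub : F'' ⊆ Ico 0 1) (ht : t ∈ Ico 0 1)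
    (htF : t ∉ F) (htF'' : t ∉ F'') :
    timedFixingSubgroup F'' ≤ timedFixingSubgroup F ⊔ timedFixingSubgroup (insert t F'') := by
  intro τ hτ
  obtain ⟨hτaut, hτfix⟩ := mem_timedFixingSubgroup.1 hτ
  have hcoe_inj {a b : ℝ} (ha : a ∈ Ico 0 1) (hb : b ∈ Ico 0 1)
      (hab : (a : UnitAddCircle) = b) : a = b :=
    (AddCircle.coe_eq_coe_iff_of_mem_Ico (a := 0) (by rwa [zero_add]) (by rwa [zero_add])).1 hab
  -- a point congruent to both sets is congruent to `F''`, hence fixed by `τ`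
  have hsep : ∀ z ∈ uIcc (τ t) t,
      (∀ a ∈ F ∪ F'', (z : UnitAddCircle) ≠ a) ∨ ∀ b ∈ insert t F'', (z : UnitAddCircle) ≠ b := by
    intro z hz
    by_contra! ⟨⟨a, ha, hza⟩, b, hb, hzb⟩
    have hab := hcoe_inj (union_subset hFsub hF''sub ha)
      (insert_subset ht hF''sub hb) (hza.symm.trans hzb)
    subst hab
    have haF'' : a ∈ F'' := (mem_insert_iff.1 hb).resolve_left
      (by rintro rfl; exact ha.elim htF htF'')
    have hzt : z = t := hτaut.2.1.eq_of_mem_uIcc_of_map_eq_self (Set.uIcc_comm (τ t) t ▸ hz)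
      (hτaut.map_eq_self_of_coe_eq (hτfix a haF'') hza)
    subst hzt
    exact htF'' (hcoe_inj ht (hF''sub haF'') hza ▸ haF'')
  obtain ⟨g, hg, hgt⟩ := isPreconnected_uIcc.exists_mem_sup_apply_eq (hF.union hF'')
    (hF''.insert t) hsep left_mem_uIcc right_mem_uIcc
  have hgF'' : g ∈ timedFixingSubgroup F'' := sup_le
    (timedFixingSubgroup_antitone subset_union_right) (timedFixingSubgroup_antitone
      (subset_insert t F'')) hg
  obtain ⟨hgτaut, hgτfix⟩ := mem_timedFixingSubgroup.1 (mul_mem hgF'' hτ)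
  have hgτ : g * τ ∈ timedFixingSubgroup (insert t F'') :=
    mem_timedFixingSubgroup.2 ⟨hgτaut, forall_mem_insert.2 ⟨hgt, hgτfix⟩⟩
  rw [← inv_mul_cancel_left g τ]
  exact mul_mem (inv_mem (sup_le_sup_right (timedFixingSubgroup_antitone subset_union_left) _ hg))
    (Subgroup.mem_sup_right hgτ)

theorem timedFixingSubgroup_inter_le_sup {F F' : Set ℝ} (hF : F.Finite) (hF' : F'.Finite)
    (hFsub : F ⊆ Ico 0 1) (hF'sub : F' ⊆ Ico 0 1) :
    timedFixingSubgroup (F ∩ F') ≤ timedFixingSubgroup F ⊔ timedFixingSubgroup F' := by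
  have h := Set.Finite.induction_on_subset (F' \ F) hF'.sdiff
    (motive := fun D _ =>
      timedFixingSubgroup (F ∩ F') ≤ timedFixingSubgroup F ⊔ timedFixingSubgroup (F ∩ F' ∪ D))
    (by simpa only [union_empty] using le_sup_right) fun {a D} haF' hD haD ih => by
      refine ih.trans (sup_le le_sup_left ?_)
      rw [union_insert]
      exact timedFixingSubgroup_le_sup_insert hF ((hF.inter_of_left F').union (hF'.sdiff.subset hD))
        hFsub (union_subset (inter_subset_left.trans hFsub) (hD.trans (sdiff_subset.trans hF'sub)))
        (hF'sub haF'.1) haF'.2 (by rintro (h | h) <;> [exact haF'.2 h.1; exact haD h])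
  simpa only [inter_comm F F', inter_union_sdiff] using h

theorem exists_list_of_mem_sup_timedFixingSubgroup {S S' : Set ℝ} {g : Equiv.Perm ℝ}
    (hg : g ∈ timedFixingSubgroup S ⊔ timedFixingSubgroup S') :
    ∃ l : List (ℝ → ℝ), (∀ σ ∈ l, IsSTimedAutomorphism S σ ∨ IsSTimedAutomorphism S' σ) ∧
      ⇑g = l.foldr (· ∘ ·) id := by
  rw [Subgroup.sup_eq_closure] at hg
  induction hg using Subgroup.closure_induction_left with
  | one => exact ⟨[], by simp, rfl⟩
  | mul_left x hx y _ ih =>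
    obtain ⟨l, hl, hy⟩ := ih
    refine ⟨x :: l, List.forall_mem_cons.2 ⟨?_, hl⟩, by rw [Equiv.Perm.coe_mul, hy]; rfl⟩
    exact hx.imp mem_timedFixingSubgroup.1 mem_timedFixingSubgroup.1
  | inv_mul_cancel x hx y _ ih =>
    obtain ⟨l, hl, hy⟩ := ih
    refine ⟨⇑x⁻¹ :: l, List.forall_mem_cons.2 ⟨?_, hl⟩, by rw [Equiv.Perm.coe_mul, hy]; rfl⟩
    exact hx.imp (mem_timedFixingSubgroup.1 <| inv_mem ·) (mem_timedFixingSubgroup.1 <| inv_mem ·)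

/-- Every `(F ∩ F')`-timed automorphism is a finite composition of automorphisms, each
of which is either an `F`-timed automorphism or an `F'`-timed automorphism. -/
theorem decomposition_of_inter_automorphism
    (F F' : Set ℝ) (hF : F.Finite) (hF' : F'.Finite)
    (hFsub : F ⊆ Set.Ico (0 : ℝ) 1) (hF'sub : F' ⊆ Set.Ico (0 : ℝ) 1) :
    ∀ π, IsSTimedAutomorphism (F ∩ F') π →
      ∃ l : List (ℝ → ℝ),
        (∀ σ ∈ l, IsSTimedAutomorphism F σ ∨ IsSTimedAutomorphism F' σ) ∧
        π = l.foldr (· ∘ ·) id := by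
  intro π hπ
  have hmem : Equiv.ofBijective π hπ.1.1 ∈ timedFixingSubgroup (F ∩ F') :=
    mem_timedFixingSubgroup.2 hπ
  exact exists_list_of_mem_sup_timedFixingSubgroup
    (timedFixingSubgroup_inter_le_sup hF hF' hFsub hF'sub hmem)
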